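/- arXiv:1207.6816 — 2 statements merged into one kernel-verified Lean document; each statement's English description precedes it below -/
import Mathlib

section
/- If Gθ has a floundered SLDF derivation D' with last resolvent F'₁,...,F'_k, and G has an SLDF derivation D using the same clause selection, then each F'_i is an instance of every atom in D corresponding to it (under the annotation correspondence). -/
set_option autoImplicit false

namespace Flounder

/-- First-order terms over function symbols `F`, with natural-number variables. -/
inductive Trm (F : Type) : Type
  | var : ℕ → Trm F
  | app : F → List (Trm F) → Trm F

/-- Substitutions map variables to terms. -/
abbrev Subst (F : Type) := ℕ → Trm F

/-- Applying a substitution to a term. -/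
def Trm.subst {F : Type} (θ : Subst F) : Trm F → Trm F
  | .var v => θ v
  | .app f ts => .app f (ts.attach.map (fun t => Trm.subst θ t.1))
  decreasing_by
    have := List.sizeOf_lt_of_mem t.2
    simp only [Trm.app.sizeOf_spec] at *
    omega

/-- Composition of substitutions. -/
def Subst.comp {F : Type} (θ σ : Subst F) : Subst F := fun v => (θ v).subst σ

/-- The variable `v` occurs in the term. -/
inductive Trm.HasVar {F : Type} (v : ℕ) : Trm F → Prop
  | var : Trm.HasVar v (.var v)
  | app {f : F} {ts : List (Trm F)} {t : Trm F} :
      t ∈ ts → Trm.HasVar v t → Trm.HasVar v (.app f ts)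

/-- The function symbol `f` occurs in the term. -/
inductive Trm.HasFunc {F : Type} (f : F) : Trm F → Prop
  | head {ts : List (Trm F)} : Trm.HasFunc f (.app f ts)
  | arg {g : F} {ts : List (Trm F)} {t : Trm F} :
      t ∈ ts → Trm.HasFunc f t → Trm.HasFunc f (.app g ts)

def Trm.Ground {F : Type} (t : Trm F) : Prop := ∀ v, ¬ t.HasVar v

/-- All function symbols of the term belong to `Fp` (a "program term"). -/
def Trm.OnlyFuncs {F : Type} (Fp : Set F) (t : Trm F) : Prop := ∀ f, t.HasFunc f → f ∈ Fp

/-- The principal function symbol is extraneous (an "encoded variable"). -/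
def EVarT {F : Type} (Fp : Set F) : Trm F → Prop
  | .var _ => False
  | .app f _ => f ∉ Fp

/-- The term contains an extraneous function symbol (an "encoded non-ground term"). -/
def ENongroundT {F : Type} (Fp : Set F) (t : Trm F) : Prop := ∃ f, t.HasFunc f ∧ f ∉ Fp

/-- A renaming substitution: variables mapped injectively to variables. -/
def IsRenaming {F : Type} (ρ : Subst F) : Prop :=
  ∃ r : ℕ → ℕ, Function.Injective r ∧ ∀ v, ρ v = Trm.var (r v)

/-- Atoms: a predicate symbol applied to a list of terms. -/
structure Atom (P F : Type) where
  pred : P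
  args : List (Trm F)

def Atom.subst {P F : Type} (θ : Subst F) (A : Atom P F) : Atom P F :=
  ⟨A.pred, A.args.map (Trm.subst θ)⟩

def Atom.HasVar {P F : Type} (A : Atom P F) (v : ℕ) : Prop := ∃ t ∈ A.args, t.HasVar v
def Atom.Ground {P F : Type} (A : Atom P F) : Prop := ∀ v, ¬ A.HasVar v
def Atom.OnlyFuncs {P F : Type} (Fp : Set F) (A : Atom P F) : Prop :=
  ∀ t ∈ A.args, t.OnlyFuncs Fp

/-- `B` is an instance of `A`. -/
def Atom.Instance {P F : Type} (A B : Atom P F) : Prop := ∃ σ : Subst F, B = A.subst σ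
def Atom.Variant {P F : Type} (A B : Atom P F) : Prop := A.Instance B ∧ B.Instance A

def UnifiesA {P F : Type} (θ : Subst F) (A B : Atom P F) : Prop := A.subst θ = B.subst θ
/-- Most general unifier of two atoms: a unifier through which every unifier factors. -/
def IsMGUA {P F : Type} (θ : Subst F) (A B : Atom P F) : Prop :=
  UnifiesA θ A B ∧ ∀ η, UnifiesA η A B → ∃ σ, η = θ.comp σ

/-- Definite clauses. -/
structure Clause (P F : Type) where
  head : Atom P F
  body : List (Atom P F)

def Clause.subst {P F : Type} (θ : Subst F) (c : Clause P F) : Clause P F :=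
  ⟨c.head.subst θ, c.body.map (Atom.subst θ)⟩
def Clause.HasVar {P F : Type} (c : Clause P F) (v : ℕ) : Prop :=
  c.head.HasVar v ∨ ∃ B ∈ c.body, B.HasVar v
def Clause.Ground {P F : Type} (c : Clause P F) : Prop :=
  c.head.Ground ∧ ∀ B ∈ c.body, B.Ground
def Clause.OnlyFuncs {P F : Type} (Fp : Set F) (c : Clause P F) : Prop :=
  c.head.OnlyFuncs Fp ∧ ∀ B ∈ c.body, B.OnlyFuncs Fp

/-- Annotations record the list of (clause, body position) pairs by which an atom was
introduced; `none` marks the top-level goal ("clause 0"). -/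
abbrev Ann (P F : Type) := List (Option (Clause P F) × ℕ)

/-- Annotated goals. -/
abbrev AGoal (P F : Type) := List (Atom P F × Ann P F)

def initGoal {P F : Type} (G : List (Atom P F)) : AGoal P F :=
  G.zipIdx.map fun p => (p.1, [(none, p.2 + 1)])

def AGoal.HasVar {P F : Type} (g : AGoal P F) (v : ℕ) : Prop := ∃ a ∈ g, a.1.HasVar v
def AGoal.inst {P F : Type} (θ : Subst F) (g : AGoal P F) : AGoal P F :=
  g.map fun a => (a.1.subst θ, a.2)

/-- The annotated body of a clause variant `c` (with original clause `c₀`), inserted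
in place of a selected atom with annotation `ann`. -/
def annBody {P F : Type} (c c₀ : Clause P F) (ann : Ann P F) : AGoal P F :=
  c.body.zipIdx.map fun p => (p.1, (some c₀, p.2 + 1) :: ann)

/-- SLD(F) derivations of length `n` from goal `g0` with program `prog`, where only
atoms in the callable set `C` may be selected (SLD resolution: `C = Set.univ`).
`raw i` is the `i`-th goal with atoms as introduced (not yet instantiated), and
`sub i` is the composition of the mgus of the first `i` steps; the actual `i`-th
resolvent is `raw i` instantiated by `sub i`.  Clause variants are renamed apart. -/
structure Derivation (P F : Type) (prog : Set (Clause P F)) (C : Set (Atom P F))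
    (g0 : AGoal P F) (n : ℕ) where
  raw : ℕ → AGoal P F
  sub : ℕ → Subst F
  orig : ℕ → Clause P F
  cl : ℕ → Clause P F
  mgu : ℕ → Subst F
  selAtom : ℕ → Atom P F
  selAnn : ℕ → Ann P F
  hraw0 : raw 0 = g0
  hsub0 : sub 0 = fun v => Trm.var v
  horig : ∀ i < n, orig i ∈ prog
  hvariant : ∀ i < n, ∃ ρ, IsRenaming ρ ∧ cl i = (orig i).subst ρ
  hfresh : ∀ i < n, ∀ v, (cl i).HasVar v →
      (∀ j ≤ i, ¬ AGoal.HasVar (raw j) v) ∧ sub i v = Trm.var v ∧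
        ∀ u, ¬ Trm.HasVar v (sub i u)
  hstep : ∀ i < n, ∃ pre post, raw i = pre ++ ((selAtom i, selAnn i) :: post) ∧
      (selAtom i).subst (sub i) ∈ C ∧
      IsMGUA (mgu i) ((selAtom i).subst (sub i)) (cl i).head ∧
      raw (i + 1) = pre ++ annBody (cl i) (orig i) (selAnn i) ++ post
  hsubs : ∀ i < n, sub (i + 1) = (sub i).comp (mgu i)

namespace Derivation

variable {P F : Type} {prog : Set (Clause P F)} {C : Set (Atom P F)} {g0 : AGoal P F} {n : ℕ}

/-- The `i`-th resolvent. -/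
def resolvent (D : Derivation P F prog C g0 n) (i : ℕ) : AGoal P F :=
  AGoal.inst (D.sub i) (D.raw i)

/-- The atoms of the `i`-th resolvent. -/
def resAtoms (D : Derivation P F prog C g0 n) (i : ℕ) : List (Atom P F) :=
  (D.resolvent i).map Prod.fst

def rawAtoms (D : Derivation P F prog C g0 n) (i : ℕ) : List (Atom P F) :=
  (D.raw i).map Prod.fst

def Successful (D : Derivation P F prog C g0 n) : Prop := D.raw n = []

/-- Floundered: the last resolvent is nonempty and none of its atoms is callable. -/
def Floundered (D : Derivation P F prog C g0 n) : Prop :=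
  D.raw n ≠ [] ∧ ∀ a ∈ D.resolvent n, a.1 ∉ C

/-- The composed answer substitution of the derivation. -/
def answer (D : Derivation P F prog C g0 n) : Subst F := D.sub n

end Derivation

/-- Two derivations use the same clause selection: corresponding selected atoms
(equal annotations) are resolved with the same program clause. -/
def SameSelection {P F : Type} {prog prog' : Set (Clause P F)} {C C' : Set (Atom P F)}
    {g0 g0' : AGoal P F} {n n' : ℕ}
    (D : Derivation P F prog C g0 n) (D' : Derivation P F prog' C' g0' n') : Prop :=
  ∀ i < n, ∀ i' < n', D.selAnn i = D'.selAnn i' → D.orig i = D'.orig i'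

/-- The answer substitution is a renaming on the variables of goal `G`. -/
def RenamingOnGoal {P F : Type} (G : List (Atom P F)) (θ : Subst F) : Prop :=
  (∀ v, (∃ A ∈ G, A.HasVar v) → ∃ u, θ v = Trm.var u) ∧
  (∀ v w, (∃ A ∈ G, A.HasVar v) → (∃ A ∈ G, A.HasVar w) → v ≠ w → θ v ≠ θ w)

/-- Goal-level instance (one substitution applied throughout). -/
def GoalInst {P F : Type} (g h : List (Atom P F)) : Prop :=
  ∃ σ : Subst F, h = g.map (Atom.subst σ)

/-- `m` is a most general common instance of `g₁` and `g₂`. -/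
def MGIGoal {P F : Type} (g₁ g₂ m : List (Atom P F)) : Prop :=
  GoalInst g₁ m ∧ GoalInst g₂ m ∧
    ∀ m', GoalInst g₁ m' → GoalInst g₂ m' → GoalInst m m'

/-! ## Delay declarations -/

/-- Delay conditions over `n` argument positions, built from `var`, `nonground`,
conjunction and disjunction. -/
inductive DCond : ℕ → Type
  | var {n : ℕ} : Fin n → DCond n
  | nonground {n : ℕ} : Fin n → DCond n
  | conj {n : ℕ} : DCond n → DCond n → DCond n
  | disj {n : ℕ} : DCond n → DCond n → DCond n

/-- Concrete (procedural) truth of a delay condition. -/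
def DCond.holds {F : Type} {n : ℕ} (args : Fin n → Trm F) : DCond n → Prop
  | DCond.var i => ∃ v, args i = Trm.var v
  | DCond.nonground i => ¬ Trm.Ground (args i)
  | DCond.conj c d => DCond.holds args c ∧ DCond.holds args d
  | DCond.disj c d => DCond.holds args c ∨ DCond.holds args d

structure DelayDecl (P : Type) where
  pred : P
  arity : ℕ
  cond : DCond arity

/-- A program with delay declarations. -/
structure DProg (P F : Type) where
  prog : Set (Clause P F)
  delays : Set (DelayDecl P)

/-- An atom matches some delay declaration whose condition holds. -/
def Delayed {P F : Type} (dp : DProg P F) (A : Atom P F) : Prop :=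
  ∃ d ∈ dp.delays, d.pred = A.pred ∧ ∃ h : A.args.length = d.arity,
    DCond.holds (fun i => A.args.get (Fin.cast h.symm i)) d.cond

/-- The callable atom set induced by the delay declarations. -/
def Callable {P F : Type} (dp : DProg P F) : Set (Atom P F) := {A | ¬ Delayed dp A}

/-- A nonempty goal all of whose atoms are delayed. -/
def ImmFloundered {P F : Type} (dp : DProg P F) (G : List (Atom P F)) : Prop :=
  G ≠ [] ∧ ∀ A ∈ G, Delayed dp A

/-! ## The SF transformation -/

/-- Predicates of `SF(P)`: the original predicates plus `evar/1` and `enonground/1`. -/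
inductive SPred (P : Type) : Type
  | orig : P → SPred P
  | evar : SPred P
  | enonground : SPred P

def Atom.mapPred {P Q F : Type} (f : P → Q) (A : Atom P F) : Atom Q F := ⟨f A.pred, A.args⟩
def Clause.mapPred {P Q F : Type} (f : P → Q) (c : Clause P F) : Clause Q F :=
  ⟨c.head.mapPred f, c.body.map (Atom.mapPred f)⟩

/-- Disjunctive normal form of a delay condition: a list of conjunctions of
literals `(i, true)` (= var) and `(i, false)` (= nonground). -/
def DCond.dnf {n : ℕ} : DCond n → List (List (Fin n × Bool))
  | DCond.var i => [[(i, true)]]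
  | DCond.nonground i => [[(i, false)]]
  | DCond.conj c d => (DCond.dnf c).flatMap (fun a => (DCond.dnf d).map (fun b => a ++ b))
  | DCond.disj c d => DCond.dnf c ++ DCond.dnf d

/-- The delay clauses `A :- C'` added for the delay declarations (conditions
translated to `evar`/`enonground` calls, one clause per DNF disjunct). -/
def declClauses {P F : Type} (dp : DProg P F) : Set (Clause (SPred P) F) :=
  { c | ∃ d ∈ dp.delays, ∃ conj ∈ DCond.dnf d.cond,
      c = ⟨⟨SPred.orig d.pred, (List.range d.arity).map Trm.var⟩,
           conj.map (fun p =>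
             ⟨if p.2 then SPred.evar else SPred.enonground, [Trm.var (p.1 : ℕ)]⟩)⟩ }

/-- The infinite fact set defining `evar/1`. -/
def evarFacts (P : Type) {F : Type} (Fp : Set F) : Set (Clause (SPred P) F) :=
  { c | ∃ t : Trm F, t.Ground ∧ EVarT Fp t ∧ c = ⟨⟨SPred.evar, [t]⟩, []⟩ }

/-- The infinite fact set defining `enonground/1`. -/
def engFacts (P : Type) {F : Type} (Fp : Set F) : Set (Clause (SPred P) F) :=
  { c | ∃ t : Trm F, t.Ground ∧ ENongroundT Fp t ∧ c = ⟨⟨SPred.enonground, [t]⟩, []⟩ }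

/-- All delay clauses: those for the declarations plus the `evar`/`enonground` facts. -/
def delayClausesAll {P F : Type} (Fp : Set F) (dp : DProg P F) : Set (Clause (SPred P) F) :=
  declClauses dp ∪ evarFacts P Fp ∪ engFacts P Fp

/-- The transformed program `SF(P)`. -/
def SFprog {P F : Type} (Fp : Set F) (dp : DProg P F) : Set (Clause (SPred P) F) :=
  (Clause.mapPred SPred.orig '' dp.prog) ∪ delayClausesAll Fp dp

/-- The (ground) success set of a program: ground atoms with successful SLD
derivations. -/
def SS {P F : Type} (prog : Set (Clause P F)) : Set (Atom P F) :=
  { A | A.Ground ∧ ∃ n, ∃ D : Derivation P F prog Set.univ (initGoal [A]) n, D.Successful }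

/-- The non-ground flounder set: program atoms with floundered derivations whose
floundered computed answer substitution is a renaming (empty). -/
def NFS {P F : Type} (Fp : Set F) (prog : Set (Clause P F)) (C : Set (Atom P F)) :
    Set (Atom P F) :=
  { A | A.OnlyFuncs Fp ∧ ∃ n, ∃ D : Derivation P F prog C (initGoal [A]) n,
        D.Floundered ∧ RenamingOnGoal [A] (D.sub n) }

/-- `A` is a ground encoding of `B`: distinct variables of `B` are replaced by
distinct ground terms with extraneous principal function symbols. -/
def Encodes {P F : Type} (Fp : Set F) (B A : Atom P F) : Prop :=
  ∃ σ : Subst F, A = B.subst σ ∧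
    (∀ v, B.HasVar v → (σ v).Ground ∧ EVarT Fp (σ v)) ∧
    (∀ v w, B.HasVar v → B.HasVar w → v ≠ w → σ v ≠ σ w)

/-- The encoded flounder set. -/
def EFS {P F : Type} (Fp : Set F) (prog : Set (Clause P F)) (C : Set (Atom P F)) :
    Set (Atom P F) :=
  { A | ∃ B ∈ NFS Fp prog C, Encodes Fp B A }

/-- The computed answer binds each variable of `G` either to a variable or to a
ground term with extraneous principal function symbol, injectively. -/
def ExtrAnswer {P F : Type} (Fp : Set F) (G : List (Atom P F)) (θ : Subst F) : Prop :=
  (∀ v, (∃ A ∈ G, A.HasVar v) →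
      (∃ u, θ v = Trm.var u) ∨ ((θ v).Ground ∧ EVarT Fp (θ v))) ∧
  (∀ v w, (∃ A ∈ G, A.HasVar v) → (∃ A ∈ G, A.HasVar w) → v ≠ w → θ v ≠ θ w)

/-! ## Proof trees and the flagged immediate consequence operator -/

/-- `Proof prog A n`: the ground atom `A` has an SLD proof tree of height ≤ `n`. -/
inductive Proof {P F : Type} (prog : Set (Clause P F)) : Atom P F → ℕ → Prop
  | node {c : Clause P F} {γ : Subst F} {m : ℕ} :
      c ∈ prog → (Clause.subst γ c).Ground →
      (∀ B ∈ (Clause.subst γ c).body, Proof prog B m) →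
      Proof prog (Clause.subst γ c).head (m + 1)
  | succ {A : Atom P F} {m : ℕ} : Proof prog A m → Proof prog A (m + 1)

/-- `ProofD prog S A n`: proof tree of height ≤ `n` using at least one clause from `S`. -/
inductive ProofD {P F : Type} (prog S : Set (Clause P F)) : Atom P F → ℕ → Prop
  | here {c : Clause P F} {γ : Subst F} {m : ℕ} :
      c ∈ prog → c ∈ S → (Clause.subst γ c).Ground →
      (∀ B ∈ (Clause.subst γ c).body, Proof prog B m) →
      ProofD prog S (Clause.subst γ c).head (m + 1)
  | there {c : Clause P F} {γ : Subst F} {m : ℕ} {B : Atom P F} :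
      c ∈ prog → (Clause.subst γ c).Ground →
      (∀ B' ∈ (Clause.subst γ c).body, Proof prog B' m) →
      B ∈ (Clause.subst γ c).body → ProofD prog S B m →
      ProofD prog S (Clause.subst γ c).head (m + 1)
  | succ {A : Atom P F} {m : ℕ} : ProofD prog S A m → ProofD prog S A (m + 1)

/-- The standard immediate consequence operator. -/
def Tp {P F : Type} (prog : Set (Clause P F)) (I : Set (Atom P F)) : Set (Atom P F) :=
  { A | ∃ c ∈ prog, ∃ γ : Subst F, (Clause.subst γ c).Ground ∧
        (Clause.subst γ c).head = A ∧ ∀ B ∈ (Clause.subst γ c).body, B ∈ I }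

/-- f-interpretations: a set of ground atoms, some flagged. -/
structure FInterp (P F : Type) where
  atoms : Set (Atom P F)
  flagged : Set (Atom P F)

/-- The flagged immediate consequence operator `T^f_P`. -/
def Tf {P F : Type} (Fp : Set F) (dp : DProg P F) (I : FInterp (SPred P) F) :
    FInterp (SPred P) F where
  atoms := Tp (SFprog Fp dp) I.atoms
  flagged := { A | A ∈ Tp (SFprog Fp dp) I.atoms ∧
      (A.pred = SPred.evar ∨ A.pred = SPred.enonground ∨
       ∃ c ∈ SFprog Fp dp, ∃ γ : Subst F, (Clause.subst γ c).Ground ∧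
         (Clause.subst γ c).head = A ∧
         (∀ B ∈ (Clause.subst γ c).body, B ∈ I.atoms) ∧
         ∃ B ∈ (Clause.subst γ c).body, B ∈ I.flagged) }

/-- Iterates `T^f_P ↑ n`. -/
def TfIter {P F : Type} (Fp : Set F) (dp : DProg P F) : ℕ → FInterp (SPred P) F
  | 0 => ⟨∅, ∅⟩
  | m + 1 => Tf Fp dp (TfIter Fp dp m)

/-- `T^f_P ↑ ω`. -/
def TfOmega {P F : Type} (Fp : Set F) (dp : DProg P F) : FInterp (SPred P) F :=
  ⟨⋃ m, (TfIter Fp dp m).atoms, ⋃ m, (TfIter Fp dp m).flagged⟩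

/-! The proof follows `D` step by step, keeping a substitution `τ` that maps the current
resolvent of `D` onto the final instances, in `D'`, of the atoms carrying the same annotations.
When `D` selects an atom, `D'` must select the atom with the same annotation as well: otherwise
that atom survives to the end of `D'` as an instance of a callable atom, so it is callable,
contradicting floundering. Both steps then use variants of the same clause; undoing the two
renamings turns `τ` into a unifier of the selected atom with the clause head, which factors
through the mgu and yields the next `τ`. Annotations are never selected twice, because the
annotations of a resolvent form a suffix antichain none of whose members is a suffix of an
annotation selected before. -/

variable {P F : Type}

namespace Trm

theorem induction_on {motive : Trm F → Prop} (t : Trm F) (var : ∀ v, motive (.var v))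
    (app : ∀ f ts, (∀ t ∈ ts, motive t) → motive (.app f ts)) : motive t :=
  match t with
  | .var v => var v
  | .app f ts => app f ts fun t _ => induction_on t var app
  decreasing_by
    have := List.sizeOf_lt_of_mem ‹t ∈ ts›
    simp only [Trm.app.sizeOf_spec]
    omega

@[simp] theorem subst_var (θ : Subst F) (v : ℕ) : (Trm.var v).subst θ = θ v := by
  rw [Trm.subst]

@[simp] theorem subst_app (θ : Subst F) (f : F) (ts : List (Trm F)) :
    (Trm.app f ts).subst θ = .app f (ts.map (Trm.subst θ)) := by
  rw [Trm.subst, List.attach_map_val (f := Trm.subst θ)]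

theorem subst_subst (σ δ : Subst F) (t : Trm F) : (t.subst σ).subst δ = t.subst (σ.comp δ) := by
  induction t using induction_on with
  | var v => simp [Subst.comp]
  | app f ts ih => simpa using List.map_congr_left ih

theorem subst_congr {σ σ' : Subst F} (t : Trm F) (h : ∀ v, t.HasVar v → σ v = σ' v) :
    t.subst σ = t.subst σ' := by
  induction t using induction_on with
  | var v => simpa using h v .var
  | app f ts ih =>
    simpa using List.map_congr_left fun t ht => ih t ht fun v hv => h v (.app ht hv)

@[simp] theorem subst_id (t : Trm F) : t.subst (fun v => .var v) = t := by
  induction t using induction_on with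
  | var v => simp
  | app f ts ih => simpa using List.map_congr_left ih |>.trans (List.map_id ts)

theorem hasVar_of_hasVar_subst {σ : Subst F} {v : ℕ} {t : Trm F} (h : (t.subst σ).HasVar v) :
    ∃ u, t.HasVar u ∧ (σ u).HasVar v := by
  induction t using induction_on with
  | var u => exact ⟨u, .var, by simpa using h⟩
  | app f ts ih =>
    rw [subst_app] at h
    obtain _ | ⟨hmem, hv⟩ := h
    obtain ⟨t, ht, rfl⟩ := List.mem_map.1 hmem
    obtain ⟨u, hu, hvu⟩ := ih t ht hv
    exact ⟨u, .app ht hu, hvu⟩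

theorem HasVar.subst {σ : Subst F} {v u : ℕ} {t : Trm F} (h : t.HasVar u)
    (hu : (σ u).HasVar v) : (t.subst σ).HasVar v := by
  induction h with
  | var => simpa using hu
  | app hmem _ ih => simpa using HasVar.app (List.mem_map_of_mem hmem) ih

end Trm

namespace Subst

theorem comp_assoc (σ κ μ : Subst F) : (σ.comp κ).comp μ = σ.comp (κ.comp μ) :=
  funext fun v => Trm.subst_subst κ μ (σ v)

@[simp] theorem comp_id (σ : Subst F) : σ.comp (fun v => .var v) = σ :=
  funext fun v => Trm.subst_id (σ v)

end Subst

namespace Atom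

theorem subst_subst (σ δ : Subst F) (A : Atom P F) :
    (A.subst σ).subst δ = A.subst (σ.comp δ) := by
  simpa [Atom.subst] using List.map_congr_left fun t _ => Trm.subst_subst σ δ t

theorem subst_congr {σ σ' : Subst F} (A : Atom P F) (h : ∀ v, A.HasVar v → σ v = σ' v) :
    A.subst σ = A.subst σ' := by
  simpa [Atom.subst] using
    List.map_congr_left fun t ht => Trm.subst_congr t fun v hv => h v ⟨t, ht, hv⟩

@[simp] theorem subst_id (A : Atom P F) : A.subst (fun v => .var v) = A := by
  simp [Atom.subst, show Trm.subst (fun v => .var v) = id from funext Trm.subst_id]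

theorem subst_eq_self {σ : Subst F} (A : Atom P F) (h : ∀ v, A.HasVar v → σ v = .var v) :
    A.subst σ = A := by
  rw [A.subst_congr h, subst_id]

theorem hasVar_of_hasVar_subst {σ : Subst F} {v : ℕ} {A : Atom P F}
    (h : (A.subst σ).HasVar v) : ∃ u, A.HasVar u ∧ (σ u).HasVar v := by
  obtain ⟨_, hmem, hv⟩ := h
  obtain ⟨t, ht, rfl⟩ := List.mem_map.1 hmem
  obtain ⟨u, hu, hvu⟩ := Trm.hasVar_of_hasVar_subst hv
  exact ⟨u, ⟨t, ht, hu⟩, hvu⟩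

theorem HasVar.subst {σ : Subst F} {v u : ℕ} {A : Atom P F} (h : A.HasVar u)
    (hu : (σ u).HasVar v) : (A.subst σ).HasVar v := by
  obtain ⟨t, ht, hv⟩ := h
  exact ⟨t.subst σ, List.mem_map_of_mem ht, hv.subst hu⟩

end Atom

def SuffixIncomp {α : Type} (s t : List α) : Prop := ¬ s <:+ t ∧ ¬ t <:+ s

namespace SuffixIncomp

variable {α : Type} {s t : List α}

theorem symm (h : SuffixIncomp s t) : SuffixIncomp t s := ⟨h.2, h.1⟩

theorem cons_right (h : SuffixIncomp s t) (x : α) : SuffixIncomp s (x :: t) := by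
  refine ⟨fun hs => ?_, fun ht => h.2 ((List.suffix_cons x t).trans ht)⟩
  rcases List.suffix_cons_iff.1 hs with rfl | hs
  · exact h.2 (List.suffix_cons x t)
  · exact h.1 hs

theorem cons_cons {x y : α} (hxy : x ≠ y) (s : List α) : SuffixIncomp (x :: s) (y :: s) :=
  ⟨fun h => hxy (List.head_eq_of_cons_eq (h.eq_of_length rfl)),
    fun h => hxy (List.head_eq_of_cons_eq (h.eq_of_length rfl)).symm⟩

end SuffixIncomp

section Replace

variable {α : Type} {pre post kids : List (List α)} {s : List α}

theorem pairwise_suffixIncomp_replace (h : (pre ++ s :: post).Pairwise SuffixIncomp)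
    (hkids : kids.Pairwise SuffixIncomp) (hext : ∀ t ∈ kids, ∃ x, t = x :: s) :
    (pre ++ kids ++ post).Pairwise SuffixIncomp := by
  simp only [List.pairwise_append, List.pairwise_cons, List.mem_append, List.mem_cons] at h ⊢
  obtain ⟨hpre, ⟨hspost, hpost⟩, hpre_s⟩ := h
  refine ⟨⟨hpre, hkids, fun a ha b hb => ?_⟩, hpost, ?_⟩
  · obtain ⟨x, rfl⟩ := hext b hb
    exact (hpre_s a ha s (.inl rfl)).cons_right x
  · rintro a (ha | ha) b hb
    · exact hpre_s a ha b (.inr hb)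
    · obtain ⟨x, rfl⟩ := hext a ha
      exact ((hspost b hb).symm.cons_right x).symm

theorem forall_not_suffix_replace {u : List α} (h : ∀ t ∈ pre ++ s :: post, ¬ t <:+ u)
    (hext : ∀ t ∈ kids, ∃ x, t = x :: s) : ∀ t ∈ pre ++ kids ++ post, ¬ t <:+ u := by
  simp only [List.mem_append, List.mem_cons] at h ⊢
  rintro t ((ht | ht) | ht) htu
  · exact h t (.inl ht) htu
  · obtain ⟨x, rfl⟩ := hext t ht
    exact h s (.inr (.inl rfl)) ((List.suffix_cons x s).trans htu)
  · exact h t (.inr (.inr ht)) htu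

theorem not_suffix_replace (h : (pre ++ s :: post).Pairwise SuffixIncomp)
    (hext : ∀ t ∈ kids, ∃ x, t = x :: s) : ∀ t ∈ pre ++ kids ++ post, ¬ t <:+ s := by
  simp only [List.pairwise_append, List.pairwise_cons, List.mem_cons] at h
  simp only [List.mem_append]
  rintro t ((ht | ht) | ht) hts
  · exact (h.2.2 t ht s (.inl rfl)).1 hts
  · obtain ⟨x, rfl⟩ := hext t ht
    simpa using hts.length_le
  · exact (h.2.1.1 t ht).2 hts

end Replace

def anns (g : AGoal P F) : List (Ann P F) := g.map Prod.snd

theorem mem_annBody_iff {c c₀ : Clause P F} {ann ann' : Ann P F} {A : Atom P F} :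
    (A, ann') ∈ annBody c c₀ ann ↔ ∃ m, c.body[m]? = some A ∧ ann' = (some c₀, m + 1) :: ann := by
  simp only [annBody, List.mem_map, Prod.mk.injEq, Prod.exists, List.mem_zipIdx_iff_getElem?]
  constructor
  · rintro ⟨B, m, hm, rfl, rfl⟩
    exact ⟨m, hm, rfl⟩
  · rintro ⟨m, hm, rfl⟩
    exact ⟨A, m, hm, rfl, rfl⟩

theorem mem_initGoal_iff {G : List (Atom P F)} {A : Atom P F} {ann : Ann P F} :
    (A, ann) ∈ initGoal G ↔ ∃ k, G[k]? = some A ∧ ann = [(none, k + 1)] := by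
  simp only [initGoal, List.mem_map, Prod.mk.injEq, Prod.exists, List.mem_zipIdx_iff_getElem?]
  constructor
  · rintro ⟨B, k, hk, rfl, rfl⟩
    exact ⟨k, hk, rfl⟩
  · rintro ⟨k, hk, rfl⟩
    exact ⟨A, k, hk, rfl, rfl⟩

theorem anns_annBody (c c₀ : Clause P F) (ann : Ann P F) :
    anns (annBody c c₀ ann) = (List.range c.body.length).map fun m => (some c₀, m + 1) :: ann := by
  rw [anns, annBody, List.map_map, List.range_eq_range', ← List.zipIdx_map_snd 0 c.body,
    List.map_map]
  rfl

theorem anns_initGoal (G : List (Atom P F)) :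
    anns (initGoal G) =
      (List.range G.length).map fun k => [((none : Option (Clause P F)), k + 1)] := by
  rw [anns, initGoal, List.map_map, List.range_eq_range', ← List.zipIdx_map_snd 0 G, List.map_map]
  rfl

theorem pairwise_anns_annBody (c c₀ : Clause P F) (ann : Ann P F) :
    (anns (annBody c c₀ ann)).Pairwise SuffixIncomp := by
  rw [anns_annBody, List.pairwise_map]
  exact List.nodup_range.imp fun hne => .cons_cons (by simpa using hne) ann

theorem pairwise_anns_initGoal (G : List (Atom P F)) :
    (anns (initGoal G)).Pairwise SuffixIncomp := by
  rw [anns_initGoal, List.pairwise_map]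
  exact List.nodup_range.imp fun hne => .cons_cons (by simpa using hne) []

namespace Derivation

section

variable {prog : Set (Clause P F)} {C : Set (Atom P F)} {g0 : AGoal P F} {n : ℕ}
  (D : Derivation P F prog C g0 n)

theorem selected_mem_raw {i : ℕ} (hi : i < n) : (D.selAtom i, D.selAnn i) ∈ D.raw i := by
  obtain ⟨pre, post, h, -⟩ := D.hstep i hi
  simp [h]

theorem mem_raw_succ {i : ℕ} (hi : i < n) {A : Atom P F} {ann : Ann P F}
    (h : (A, ann) ∈ D.raw (i + 1)) : (A, ann) ∈ D.raw i ∨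
      ∃ m, (D.cl i).body[m]? = some A ∧ ann = (some (D.orig i), m + 1) :: D.selAnn i := by
  obtain ⟨pre, post, hi, -, -, hsucc⟩ := D.hstep i hi
  rw [hsucc, List.mem_append, List.mem_append, mem_annBody_iff] at h
  rw [hi]
  rcases h with (h | h) | h <;> simp [h]

theorem mem_raw_succ_of_mem {i : ℕ} (hi : i < n) {A : Atom P F} {ann : Ann P F}
    (h : (A, ann) ∈ D.raw i) (hne : ann ≠ D.selAnn i) : (A, ann) ∈ D.raw (i + 1) := by
  obtain ⟨pre, post, hi, -, -, hsucc⟩ := D.hstep i hi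
  rw [hi] at h
  rw [hsucc]
  aesop

theorem mem_raw_succ_of_body {i m : ℕ} (hi : i < n) {A : Atom P F}
    (hA : (D.cl i).body[m]? = some A) :
    (A, (some (D.orig i), m + 1) :: D.selAnn i) ∈ D.raw (i + 1) := by
  obtain ⟨pre, post, -, -, -, hsucc⟩ := D.hstep i hi
  simp [hsucc, mem_annBody_iff.2 ⟨m, hA, rfl⟩]

theorem mem_raw_origin {j : ℕ} (hj : j ≤ n) {A : Atom P F} {ann : Ann P F}
    (h : (A, ann) ∈ D.raw j) : (A, ann) ∈ g0 ∨ ∃ i < j, ∃ m, (D.cl i).body[m]? = some A ∧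
      ann = (some (D.orig i), m + 1) :: D.selAnn i := by
  induction j generalizing A ann with
  | zero => exact .inl (D.hraw0 ▸ h)
  | succ j ih =>
    rcases D.mem_raw_succ hj h with hold | ⟨m, hm, rfl⟩
    · rcases ih (by omega) hold with hg | ⟨i, hi, rest⟩
      · exact .inl hg
      · exact .inr ⟨i, by omega, rest⟩
    · exact .inr ⟨j, by omega, m, hm, rfl⟩

theorem mem_raw_last_or_selected {i : ℕ} (hi : i ≤ n) {A : Atom P F} {ann : Ann P F}
    (h : (A, ann) ∈ D.raw i) : (A, ann) ∈ D.raw n ∨ ∃ k, i ≤ k ∧ k < n ∧ D.selAnn k = ann := by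
  suffices ∀ k, i ≤ k → k ≤ n → (A, ann) ∈ D.raw k ∨ ∃ k', i ≤ k' ∧ k' < k ∧ D.selAnn k' = ann by
    simpa using this n hi le_rfl
  intro k hik
  induction k, hik using Nat.le_induction with
  | base => exact fun _ => .inl h
  | succ k hik ih =>
    intro hk
    rcases ih (by omega) with hmem | ⟨k', hk'⟩
    · by_cases hsel : ann = D.selAnn k
      · exact .inr ⟨k, hik, by omega, hsel.symm⟩
      · exact .inl (D.mem_raw_succ_of_mem (by omega) hmem hsel)
    · exact .inr ⟨k', hk'.1, by omega, hk'.2.2⟩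

theorem cl_body_length {i : ℕ} (hi : i < n) : (D.cl i).body.length = (D.orig i).body.length := by
  obtain ⟨ρ, -, h⟩ := D.hvariant i hi
  simp [h, Clause.subst]

theorem sub_eq_comp {a b : ℕ} (hab : a ≤ b) (hb : b ≤ n) : ∃ κ, D.sub b = (D.sub a).comp κ := by
  induction b, hab using Nat.le_induction with
  | base => exact ⟨_, (Subst.comp_id _).symm⟩
  | succ b hab ih =>
    obtain ⟨κ, hκ⟩ := ih (by omega)
    exact ⟨κ.comp (D.mgu b), by rw [D.hsubs b (by omega), hκ, Subst.comp_assoc]⟩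

theorem subst_sub_eq_self {i : ℕ} (hi : i < n) {A : Atom P F}
    (hA : ∀ v, A.HasVar v → (D.cl i).HasVar v) : A.subst (D.sub i) = A :=
  A.subst_eq_self fun v hv => (D.hfresh i hi v (hA v hv)).2.1

theorem selAtom_subst_sub {i k : ℕ} (hik : i < k) (hk : k ≤ n) :
    (D.selAtom i).subst (D.sub k) = (D.cl i).head.subst (D.sub k) := by
  obtain ⟨κ, hκ⟩ := D.sub_eq_comp hik hk
  have hhead : (D.cl i).head.subst (D.sub i) = (D.cl i).head :=
    D.subst_sub_eq_self (by omega) fun v hv => .inl hv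
  obtain ⟨-, -, -, -, hmgu, -⟩ := D.hstep i (by omega)
  simp only [hκ, D.hsubs i (by omega), ← Atom.subst_subst]
  rw [hmgu.1, hhead]

theorem anns_raw_step {k : ℕ} (hk : k < n) : ∃ pre post,
    anns (D.raw k) = pre ++ D.selAnn k :: post ∧
    anns (D.raw (k + 1)) = pre ++ anns (annBody (D.cl k) (D.orig k) (D.selAnn k)) ++ post := by
  obtain ⟨pre, post, h, -, -, hsucc⟩ := D.hstep k hk
  exact ⟨anns pre, anns post, by simp [h, anns], by simp [hsucc, anns]⟩

theorem anns_invariant (h0 : (anns g0).Pairwise SuffixIncomp) {k : ℕ} (hk : k ≤ n) :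
    (anns (D.raw k)).Pairwise SuffixIncomp ∧
      ∀ s ∈ anns (D.raw k), ∀ i < k, ¬ s <:+ D.selAnn i := by
  induction k with
  | zero =>
    rw [D.hraw0]
    exact ⟨h0, by simp⟩
  | succ k ih =>
    obtain ⟨hpair, hhist⟩ := ih (by omega)
    obtain ⟨pre, post, hk, hk1⟩ := D.anns_raw_step (k := k) (by omega)
    have hkids : ∀ t ∈ anns (annBody (D.cl k) (D.orig k) (D.selAnn k)),
        ∃ x, t = x :: D.selAnn k := by
      simp only [anns_annBody, List.mem_map]
      rintro t ⟨m, -, rfl⟩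
      exact ⟨_, rfl⟩
    rw [hk] at hpair hhist
    rw [hk1]
    refine ⟨pairwise_suffixIncomp_replace hpair (pairwise_anns_annBody ..) hkids, ?_⟩
    intro s hs i hi
    rcases Nat.lt_succ_iff_lt_or_eq.1 hi with hi | rfl
    · exact forall_not_suffix_replace (fun t ht => hhist t ht i hi) hkids s hs
    · exact not_suffix_replace hpair hkids s hs

theorem selAnn_injOn (h0 : (anns g0).Pairwise SuffixIncomp) {i₀ i₁ : ℕ} (h₀ : i₀ < n) (h₁ : i₁ < n)
    (h : D.selAnn i₀ = D.selAnn i₁) : i₀ = i₁ := by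
  have key : ∀ {i k}, i < k → k < n → D.selAnn i ≠ D.selAnn k := fun hik hk heq =>
    (D.anns_invariant h0 hk.le).2 _ (List.mem_map_of_mem (D.selected_mem_raw hk)) _ hik
      (heq ▸ List.suffix_refl _)
  rcases lt_trichotomy i₀ i₁ with hlt | heq | hgt
  · exact absurd h (key hlt h₁)
  · exact heq
  · exact absurd h.symm (key hgt h₀)

end

variable {prog : Set (Clause P F)} {C : Set (Atom P F)} {n : ℕ}
  {G : List (Atom P F)} (D : Derivation P F prog C (initGoal G) n)

theorem getElem?_eq_of_mem_raw {i k : ℕ} (hi : i ≤ n) {A : Atom P F}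
    (h : (A, [(none, k + 1)]) ∈ D.raw i) : G[k]? = some A := by
  rcases D.mem_raw_origin hi h with hinit | ⟨_, _, _, _, hann⟩
  · obtain ⟨k', hk', hann⟩ := mem_initGoal_iff.1 hinit
    simp_all
  · simp at hann

theorem body_getElem?_eq_of_mem_raw {i k m : ℕ} (hi : i < n) (hk : k ≤ n) {A : Atom P F}
    {c : Clause P F} (h : (A, (some c, m + 1) :: D.selAnn i) ∈ D.raw k) :
    (D.cl i).body[m]? = some A := by
  rcases D.mem_raw_origin hk h with hinit | ⟨i', hi', m', hm', hann⟩
  · obtain ⟨_, _, hann⟩ := mem_initGoal_iff.1 hinit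
    simp at hann
  · simp only [List.cons.injEq, Prod.mk.injEq, Nat.add_right_cancel_iff] at hann
    obtain ⟨⟨-, rfl⟩, hsel⟩ := hann
    rwa [D.selAnn_injOn (pairwise_anns_initGoal G) hi (by omega) hsel]

end Derivation

theorem IsRenaming.exists_inverse_on {ρ : Subst F} (hρ : IsRenaming ρ) (W : Set ℕ)
    (τ φ : Subst F) : ∃ η : Subst F, (∀ v ∉ W, η v = τ v) ∧
      ∀ A : Atom P F, (∀ v, (A.subst ρ).HasVar v → v ∈ W) → (A.subst ρ).subst η = A.subst φ := by
  classical
  obtain ⟨r, hr, hρr⟩ := hρ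
  refine ⟨fun v => if v ∈ W then Function.extend r φ τ v else τ v,
    fun v hv => if_neg hv, fun A hA => ?_⟩
  rw [Atom.subst_subst]
  refine A.subst_congr fun u hu => ?_
  have hW : r u ∈ W := hA _ (hu.subst (by rw [hρr]; exact .var))
  simp [Subst.comp, hρr, hW, hr.extend_apply]

section SameSelection

variable {prog prog' : Set (Clause P F)} {C C' : Set (Atom P F)} {g0 g0' : AGoal P F}
  {n n' : ℕ}

def SubsumesFinal (D' : Derivation P F prog' C' g0' n') (D : Derivation P F prog C g0 n)
    (j : ℕ) (τ : Subst F) : Prop :=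
  ∀ A ann, (A, ann) ∈ D.raw j → ∀ i ≤ n', ∀ A', (A', ann) ∈ D'.raw i →
    A'.subst (D'.sub n') = (A.subst (D.sub j)).subst τ

def StepsMatched (D' : Derivation P F prog' C' g0' n') (D : Derivation P F prog C g0 n)
    (j : ℕ) : Prop :=
  ∀ i < j, ∃ i' < n', D'.selAnn i' = D.selAnn i

variable {G : List (Atom P F)} {θ : Subst F}
  (D' : Derivation P F prog' C (initGoal (G.map (Atom.subst θ))) n')
  (D : Derivation P F prog C (initGoal G) n)

theorem subsumesFinal_zero : SubsumesFinal D' D 0 (θ.comp (D'.sub n')) := by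
  intro A ann hA i hi A' hA'
  rw [D.hraw0] at hA
  obtain ⟨k, hk, rfl⟩ := mem_initGoal_iff.1 hA
  have hA'k := D'.getElem?_eq_of_mem_raw hi hA'
  rw [List.getElem?_map, hk, Option.map_some, Option.some_inj] at hA'k
  rw [← hA'k, D.hsub0, Atom.subst_id, Atom.subst_subst]

variable {D' D}

theorem StepsMatched.exists_mem_raw (hsel : SameSelection D' D) {j : ℕ}
    (hm : StepsMatched D' D j) (hj : j ≤ n) {A : Atom P F} {ann : Ann P F}
    (hA : (A, ann) ∈ D.raw j) : ∃ i ≤ n', ∃ A', (A', ann) ∈ D'.raw i := by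
  rcases D.mem_raw_origin hj hA with hinit | ⟨i, hij, m, hm', rfl⟩
  · obtain ⟨k, hk, rfl⟩ := mem_initGoal_iff.1 hinit
    refine ⟨0, Nat.zero_le _, A.subst θ, ?_⟩
    rw [D'.hraw0, mem_initGoal_iff]
    exact ⟨k, by simp [hk], rfl⟩
  · obtain ⟨i', hi', hsame⟩ := hm i hij
    have horig := hsel i' hi' i (by omega) hsame
    have hlen : m < (D'.cl i').body.length := by
      rw [D'.cl_body_length hi', horig, ← D.cl_body_length (by omega)]
      exact (List.getElem?_eq_some_iff.1 hm').1
    refine ⟨i' + 1, hi', (D'.cl i').body[m], ?_⟩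
    rw [← horig, ← hsame]
    exact D'.mem_raw_succ_of_body hi' (List.getElem?_eq_getElem hlen)

theorem StepsMatched.exists_selAnn_eq (hC : ∀ (A : Atom P F) (σ : Subst F), A ∈ C → A.subst σ ∈ C)
    (hF : D'.Floundered) (hsel : SameSelection D' D) {j : ℕ} (hm : StepsMatched D' D j)
    (hj : j < n) {τ : Subst F} (hτ : SubsumesFinal D' D j τ) :
    ∃ i' < n', D'.selAnn i' = D.selAnn j := by
  have hsel_mem := D.selected_mem_raw hj
  obtain ⟨i, hi, A', hA'⟩ := hm.exists_mem_raw hsel hj.le hsel_mem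
  rcases D'.mem_raw_last_or_selected hi hA' with hlast | ⟨k, -, hk, hsame⟩
  · obtain ⟨-, -, -, hcall, -⟩ := D.hstep j hj
    refine absurd ?_ (hF.2 _ (List.mem_map_of_mem hlast))
    rw [hτ _ _ hsel_mem n' le_rfl A' hlast]
    exact hC _ τ hcall
  · exact ⟨k, hk, hsame⟩

theorem SubsumesFinal.exists_unifier (hsel : SameSelection D' D) {j i' : ℕ} (hj : j < n)
    (hi' : i' < n') (hsame : D'.selAnn i' = D.selAnn j) {τ : Subst F}
    (hτ : SubsumesFinal D' D j τ) : ∃ η : Subst F,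
      UnifiesA η ((D.selAtom j).subst (D.sub j)) (D.cl j).head ∧
      ∀ A ann, (A, ann) ∈ D.raw (j + 1) → ∀ i ≤ n', ∀ A', (A', ann) ∈ D'.raw i →
        A'.subst (D'.sub n') = (A.subst (D.sub j)).subst η := by
  have horig : D'.orig i' = D.orig j := hsel i' hi' j hj hsame
  obtain ⟨ρ, hρ, hcl⟩ := D.hvariant j hj
  obtain ⟨ρ', -, hcl'⟩ := D'.hvariant i' hi'
  rw [horig] at hcl'
  obtain ⟨η, hη_off, hη_on⟩ :=
    hρ.exists_inverse_on {v | (D.cl j).HasVar v} τ (ρ'.comp (D'.sub n'))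
  -- clause variables are fresh for the resolvent, so `η` and `τ` agree on it
  have hη_old : ∀ A : Atom P F, (A.subst (D.sub j)).subst η = (A.subst (D.sub j)).subst τ :=
    fun A => Atom.subst_congr _ fun v hv => hη_off v fun hcv => by
      obtain ⟨u, -, hu⟩ := Atom.hasVar_of_hasVar_subst hv
      exact (D.hfresh j hj v hcv).2.2 u hu
  have hη_head : (D.cl j).head.subst η = (D'.cl i').head.subst (D'.sub n') := by
    rw [hcl, hcl', Clause.subst, Clause.subst, Atom.subst_subst ρ']
    exact hη_on _ fun v hv => .inl (by rw [hcl]; exact hv)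
  have hη_body : ∀ (m : ℕ) (A A' : Atom P F),
      (D.cl j).body[m]? = some A → (D'.cl i').body[m]? = some A' →
      A.subst η = A'.subst (D'.sub n') := by
    intro m A A' hA hA'
    have hAmem : A ∈ (D.cl j).body := List.mem_of_getElem? hA
    rw [hcl, Clause.subst, List.getElem?_map, Option.map_eq_some_iff] at hA
    rw [hcl', Clause.subst, List.getElem?_map, Option.map_eq_some_iff] at hA'
    obtain ⟨B, hB, rfl⟩ := hA
    obtain ⟨B', hB', rfl⟩ := hA'
    obtain rfl : B = B' := Option.some_inj.1 (hB.symm.trans hB')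
    rw [Atom.subst_subst ρ']
    exact hη_on B fun v hv => .inr ⟨_, hAmem, hv⟩
  refine ⟨η, ?_, fun A ann hA i hi A' hA' => ?_⟩
  · calc ((D.selAtom j).subst (D.sub j)).subst η
        = ((D.selAtom j).subst (D.sub j)).subst τ := hη_old _
      _ = (D'.selAtom i').subst (D'.sub n') :=
        (hτ _ _ (D.selected_mem_raw hj) i' hi'.le _ (hsame ▸ D'.selected_mem_raw hi')).symm
      _ = (D'.cl i').head.subst (D'.sub n') := D'.selAtom_subst_sub hi' le_rfl
      _ = (D.cl j).head.subst η := hη_head.symm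
  · rcases D.mem_raw_succ hj hA with hA | ⟨m, hm, rfl⟩
    · rw [hη_old, hτ A ann hA i hi A' hA']
    · rw [← hsame] at hA'
      have hfix : A.subst (D.sub j) = A := D.subst_sub_eq_self hj fun v hv =>
        .inr ⟨A, List.mem_of_getElem? hm, hv⟩
      rw [hfix, hη_body m A A' hm (D'.body_getElem?_eq_of_mem_raw hi' hi hA')]

theorem SubsumesFinal.succ (hsel : SameSelection D' D) {j i' : ℕ} (hj : j < n)
    (hi' : i' < n') (hsame : D'.selAnn i' = D.selAnn j) {τ : Subst F}
    (hτ : SubsumesFinal D' D j τ) : ∃ δ, SubsumesFinal D' D (j + 1) δ := by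
  obtain ⟨η, hunif, hη⟩ := hτ.exists_unifier hsel hj hi' hsame
  obtain ⟨-, -, -, -, hmgu, -⟩ := D.hstep j hj
  obtain ⟨δ, rfl⟩ := hmgu.2 η hunif
  refine ⟨δ, fun A ann hA i hi A' hA' => ?_⟩
  rw [hη A ann hA i hi A' hA', D.hsubs j hj, ← Atom.subst_subst, ← Atom.subst_subst]

theorem stepsMatched_and_subsumesFinal
    (hC : ∀ (A : Atom P F) (σ : Subst F), A ∈ C → A.subst σ ∈ C) (hF : D'.Floundered)
    (hsel : SameSelection D' D) {j : ℕ} (hj : j ≤ n) :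
    StepsMatched D' D j ∧ ∃ τ, SubsumesFinal D' D j τ := by
  induction j with
  | zero => exact ⟨fun _ hi => absurd hi (Nat.not_lt_zero _), _, subsumesFinal_zero D' D⟩
  | succ j ih =>
    obtain ⟨hm, τ, hτ⟩ := ih (by omega)
    obtain ⟨i', hi', hsame⟩ := hm.exists_selAnn_eq hC hF hsel (by omega) hτ
    refine ⟨fun i hi => ?_, hτ.succ hsel (by omega) hi' hsame⟩
    rcases Nat.lt_succ_iff_lt_or_eq.1 hi with hi | rfl
    · exact hm i hi
    · exact ⟨i', hi', hsame⟩

end SameSelection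

/-- atoms of the last resolvent of a floundered derivation of an instance
goal are instances of all corresponding atoms of a derivation of the goal with the same
clause selection. -/
theorem floundered_atoms_instances {P F : Type} (prog : Set (Clause P F))
    (C : Set (Atom P F))
    (hC : forall (A : Atom P F) (sigma : Subst F), A ∈ C -> A.subst sigma ∈ C)
    (G : List (Atom P F)) (theta : Subst F) (n' n : ℕ)
    (D' : Derivation P F prog C (initGoal (G.map (Atom.subst theta))) n')
    (hF : D'.Floundered)
    (D : Derivation P F prog C (initGoal G) n)
    (hsel : SameSelection D' D) :
    forall a', a' ∈ D'.resolvent n' -> forall j, j ≤ n -> forall a, a ∈ D.resolvent j ->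
      a.2 = a'.2 -> Atom.Instance a.1 a'.1 := by
  intro a' ha' j hj a ha hann
  obtain ⟨-, τ, hτ⟩ := stepsMatched_and_subsumesFinal hC hF hsel hj
  obtain ⟨⟨A', ann⟩, hA', rfl⟩ := List.mem_map.1 ha'
  obtain ⟨⟨A, _⟩, hA, rfl⟩ := List.mem_map.1 ha
  obtain rfl : _ = ann := hann
  exact ⟨τ, hτ A _ hA n' le_rfl A' hA'⟩

end Flounder
end

section
/- The encoding of non-ground atoms is lossless: the map sending a program atom (atom with only program function symbols, up to renaming) to the set of its ground instances in which distinct variables are replaced by distinct terms with extraneous principal function symbols is injective, provided there are infinitely many ground terms with extraneous principal function symbols; the original atom is recovered as the most specific generalisation over program function symbols of its encoded instances. -/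
set_option autoImplicit false

namespace Flounder

/-! Fix an injective assignment `σ` of variables to ground terms with extraneous principal
symbols (it exists because there are infinitely many such terms), so that `B.subst σ`
encodes `B`. Since a program term never has an extraneous principal symbol, replacing every
`σ w` by the variable `w` commutes with substitution into program terms; applied to
`B.subst σ = B'.subst τ` it shows that any program generalisation `B'` of that single
encoding already generalises `B`. -/

section Decoding

variable {F : Type}

@[simp]
theorem Trm.subst_var_s14 (θ : Subst F) (v : ℕ) : (Trm.var v).subst θ = θ v := by
  rw [Trm.subst]

@[simp]
theorem Trm.subst_app_s14 (θ : Subst F) (f : F) (ts : List (Trm F)) :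
    (Trm.app f ts).subst θ = .app f (ts.map (Trm.subst θ)) := by
  rw [Trm.subst]
  simp

@[elab_as_elim]
theorem Trm.induction {motive : Trm F → Prop} (var : ∀ v, motive (.var v))
    (app : ∀ f ts, (∀ t ∈ ts, motive t) → motive (.app f ts)) : ∀ t, motive t
  | .var v => var v
  | .app f ts => app f ts fun t _ => Trm.induction var app t

theorem Trm.subst_id_s14 (t : Trm F) : t.subst Trm.var = t := by
  induction t using Trm.induction with
  | var v => simp
  | app f ts ih => simpa using List.map_congr_left ih

open Classical in
/-- Left inverse of substitution by an injective `σ` on program terms: each subterm `σ w`,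
outermost first, becomes the variable `w`. -/
noncomputable def Trm.decode (σ : Subst F) : Trm F → Trm F
  | .var v => .var v
  | .app f ts =>
      if Trm.app f ts ∈ Set.range σ then .var (Function.invFun σ (.app f ts))
      else .app f (ts.attach.map fun t => Trm.decode σ t.1)
  decreasing_by
    have := List.sizeOf_lt_of_mem t.2
    simp only [Trm.app.sizeOf_spec] at *
    omega

theorem Trm.decode_app {σ : Subst F} {f : F} {ts : List (Trm F)}
    (h : Trm.app f ts ∉ Set.range σ) :
    (Trm.app f ts).decode σ = .app f (ts.map (Trm.decode σ)) := by
  rw [Trm.decode, if_neg h]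
  simp

variable {Fp : Set F} {σ : Subst F}

theorem Trm.decode_apply {v : ℕ} (hσ : Function.Injective σ) (hv : EVarT Fp (σ v)) :
    (σ v).decode σ = .var v := by
  obtain ⟨g, us, hgus⟩ : ∃ g us, σ v = .app g us := by
    cases h : σ v with
    | var w => rw [h] at hv; exact hv.elim
    | app g us => exact ⟨g, us, rfl⟩
  rw [hgus, Trm.decode, if_pos ⟨v, hgus⟩, ← hgus, Function.leftInverse_invFun hσ v]

theorem Trm.decode_subst (hσ : ∀ v, EVarT Fp (σ v)) (τ : Subst F) {t : Trm F}
    (ht : t.OnlyFuncs Fp) : (t.subst τ).decode σ = t.subst (Trm.decode σ ∘ τ) := by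
  induction t using Trm.induction with
  | var v => simp
  | app f ts ih =>
    have hf : f ∈ Fp := ht f .head
    have hnot : Trm.app f (ts.map (Trm.subst τ)) ∉ Set.range σ := by
      rintro ⟨w, hw⟩
      exact absurd hf (by simpa [hw, EVarT] using hσ w)
    rw [Trm.subst_app_s14, Trm.decode_app hnot, Trm.subst_app_s14, List.map_map]
    exact congrArg _ (List.map_congr_left fun t h => ih t h fun g hg => ht g (.arg h hg))

end Decoding

section Encoding

variable {P F : Type} {Fp : Set F}

theorem Atom.subst_id_s14 (A : Atom P F) : A.subst Trm.var = A := by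
  obtain ⟨p, args⟩ := A
  simpa [Atom.subst] using List.map_congr_left fun t (_ : t ∈ args) => Trm.subst_id_s14 t

noncomputable def Atom.decode (σ : Subst F) (A : Atom P F) : Atom P F :=
  ⟨A.pred, A.args.map (Trm.decode σ)⟩

theorem Atom.decode_subst {σ : Subst F} (hσ : ∀ v, EVarT Fp (σ v)) (τ : Subst F)
    {B : Atom P F} (hB : B.OnlyFuncs Fp) : (B.subst τ).decode σ = B.subst (Trm.decode σ ∘ τ) := by
  simp only [Atom.decode, Atom.subst, List.map_map, Atom.mk.injEq, true_and]
  exact List.map_congr_left fun t ht => Trm.decode_subst hσ τ (hB t ht)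

theorem Atom.instance_of_instance_subst {σ : Subst F} (hinj : Function.Injective σ)
    (hσ : ∀ v, EVarT Fp (σ v)) {B B' : Atom P F} (hB : B.OnlyFuncs Fp)
    (hB' : B'.OnlyFuncs Fp) (h : B'.Instance (B.subst σ)) : B'.Instance B := by
  obtain ⟨τ, hτ⟩ := h
  have hdecode : Trm.decode σ ∘ σ = Trm.var := funext fun v => Trm.decode_apply hinj (hσ v)
  refine ⟨Trm.decode σ ∘ τ, ?_⟩
  calc B = B.subst (Trm.decode σ ∘ σ) := by rw [hdecode, Atom.subst_id_s14]
    _ = (B.subst σ).decode σ := (Atom.decode_subst hσ σ hB).symm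
    _ = B'.subst (Trm.decode σ ∘ τ) := by rw [hτ, Atom.decode_subst hσ τ hB']

theorem Encodes.instance {B A : Atom P F} (h : Encodes Fp B A) : B.Instance A :=
  let ⟨σ, hA, _⟩ := h
  ⟨σ, hA⟩

theorem encodes_subst {σ : Subst F} (hinj : Function.Injective σ)
    (hσ : ∀ v, (σ v).Ground ∧ EVarT Fp (σ v)) (B : Atom P F) : Encodes Fp B (B.subst σ) :=
  ⟨σ, rfl, fun v _ => hσ v, fun _ _ _ _ hne h => hne (hinj h)⟩

theorem exists_injective_encoding (hinf : {t : Trm F | t.Ground ∧ EVarT Fp t}.Infinite) :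
    ∃ σ : Subst F, Function.Injective σ ∧ ∀ v, (σ v).Ground ∧ EVarT Fp (σ v) :=
  let e := hinf.natEmbedding
  ⟨fun v => e v, Subtype.val_injective.comp e.injective, fun v => (e v).2⟩

theorem instance_of_forall_encodes_instance
    (hinf : {t : Trm F | t.Ground ∧ EVarT Fp t}.Infinite) {B B' : Atom P F}
    (hB : B.OnlyFuncs Fp) (hB' : B'.OnlyFuncs Fp)
    (h : ∀ A, Encodes Fp B A → B'.Instance A) : B'.Instance B :=
  let ⟨_, hinj, hσ⟩ := exists_injective_encoding hinf
  Atom.instance_of_instance_subst hinj (fun v => (hσ v).2) hB hB' (h _ (encodes_subst hinj hσ B))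

end Encoding

/-- the encoding of program atoms by their extraneous ground instances
is injective up to renaming, and the atom is the most specific generalisation over
program function symbols of its encoded instances. -/
theorem encoding_lossless {P F : Type} (Fp : Set F)
    (hinf : {t : Trm F | t.Ground ∧ EVarT Fp t}.Infinite) :
    (forall B1 B2 : Atom P F, B1.OnlyFuncs Fp -> B2.OnlyFuncs Fp ->
      {A | Encodes Fp B1 A} = {A | Encodes Fp B2 A} -> B1.Variant B2) ∧
    (forall B : Atom P F, B.OnlyFuncs Fp ->
      (forall A, Encodes Fp B A -> B.Instance A) ∧
      (forall B' : Atom P F, B'.OnlyFuncs Fp ->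
        (forall A, Encodes Fp B A -> B'.Instance A) -> B'.Instance B)) := by
  refine ⟨fun B1 B2 h1 h2 hset => ?_, fun B hB =>
    ⟨fun _ => Encodes.instance, fun _ hB' => instance_of_forall_encodes_instance hinf hB hB'⟩⟩
  have hiff : ∀ A, Encodes Fp B1 A ↔ Encodes Fp B2 A := Set.ext_iff.mp hset
  exact ⟨instance_of_forall_encodes_instance hinf h2 h1 fun A hA => ((hiff A).mpr hA).instance,
    instance_of_forall_encodes_instance hinf h1 h2 fun A hA => ((hiff A).mp hA).instance⟩

end Flounder
end
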